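/- (QLMS gradient) Let x ∈ ℍ^N and d ∈ ℍ be fixed, and for w ∈ ℍ^N define the error e(w) = d − Σ_{m=1}^{N} w_m x_m (i.e. e = d − wᵀx) and the real-valued cost J(w) = e(w)* e(w) = |e(w)|². Then for every n the left GHR derivative of J with respect to the component w_n satisfies ∂J/∂w_n = −½ x_n · e(w)*, i.e. the row-vector gradient is D_w J = −½ xᵀ e*. -/

import Mathlib

/-! The error is affine in `w`, so the real differential of `J = e* e` in the direction `u · eₙ`
is `-(e* u xₙ + xₙ* u* e)`. The GHR derivative is `¼ Σ D(u) u*` over `u ∈ {1, i, j, k}`, and the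
identities `Σ u b u* = 4 Re b` and `Σ u* b u* = -2 b*` turn it into `-(e* Re xₙ - ½ xₙ* e*)`,
which is `-½ xₙ e*` because `2 Re xₙ = xₙ + xₙ*`. -/

open scoped Quaternion

noncomputable section

/-- The imaginary unit `i` of the quaternions. -/
def qI : ℍ[ℝ] := ⟨0, 1, 0, 0⟩
/-- The imaginary unit `j` of the quaternions. -/
def qJ : ℍ[ℝ] := ⟨0, 0, 1, 0⟩
/-- The imaginary unit `k` of the quaternions. -/
def qK : ℍ[ℝ] := ⟨0, 0, 0, 1⟩

/-- Left GHR derivative `∂f/∂w_n` of a quaternion function of a quaternion vector variable,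
with respect to the `n`-th component (the other components held fixed):
`¼(∂f/∂a − (∂f/∂b) i − (∂f/∂c) j − (∂f/∂d) k)`, the partials being the real directional
(Fréchet) derivatives in directions `1, i, j, k` of the `n`-th coordinate. -/
def ghrV {N : ℕ} (f : (Fin N → ℍ[ℝ]) → ℍ[ℝ]) (w : Fin N → ℍ[ℝ]) (n : Fin N) : ℍ[ℝ] :=
  (1 / 4 : ℝ) • (fderiv ℝ f w (Pi.single n 1) - fderiv ℝ f w (Pi.single n qI) * qI
    - fderiv ℝ f w (Pi.single n qJ) * qJ - fderiv ℝ f w (Pi.single n qK) * qK)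

instance Quaternion.instStarModule {S R : Type*} [Monoid S] [Star S] [TrivialStar S] [CommRing R]
    [DistribMulAction S R] : StarModule S ℍ[R] :=
  ⟨fun s a => by rw [Quaternion.star_smul, star_trivial s]⟩

theorem Quaternion.one_half_mul (q : ℍ[ℝ]) : (1 / 2 : ℍ[ℝ]) * q = (1 / 2 : ℝ) • q := by
  rw [← Quaternion.coe_mul_eq_smul, Quaternion.coe_div, Quaternion.coe_one]
  rfl

theorem Quaternion.coe_re_eq_half_smul (q : ℍ[ℝ]) : (q.re : ℍ[ℝ]) = (1 / 2 : ℝ) • (q + star q) := by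
  rw [Quaternion.self_add_star, two_mul, ← two_smul ℝ, smul_smul]
  norm_num

theorem HasFDerivAt.fderiv_star_mul_self_apply {E A : Type*} [NormedAddCommGroup E]
    [NormedSpace ℝ E] [NormedRing A] [NormedAlgebra ℝ A] [StarRing A] [StarModule ℝ A]
    [ContinuousStar A] {e : E → A} {e' : E →L[ℝ] A} {w : E} (he : HasFDerivAt e e' w) (h : E) :
    fderiv ℝ (fun v => star (e v) * e v) w h = star (e w) * e' h + star (e' h) * e w := by
  have hJ : HasFDerivAt (fun v => star (e v) * e v) _ w := he.star.mul' he
  rw [hJ.fderiv]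
  rfl

section WeightedSum

variable {ι A : Type*} [Fintype ι] [NormedRing A] [NormedAlgebra ℝ A]

def weightedSumCLM (x : ι → A) : (ι → A) →L[ℝ] A :=
  ∑ m, (ContinuousLinearMap.mul ℝ A).flip (x m) ∘L ContinuousLinearMap.proj m

theorem weightedSumCLM_apply (x v : ι → A) : weightedSumCLM x v = ∑ m, v m * x m := by
  simp [weightedSumCLM]

theorem weightedSumCLM_single [DecidableEq ι] (x : ι → A) (n : ι) (q : A) :
    weightedSumCLM x (Pi.single n q) = q * x n := by
  simp [weightedSumCLM_apply, Pi.single_apply, ite_mul]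

theorem hasFDerivAt_sub_weightedSum (x : ι → A) (d : A) (w : ι → A) :
    HasFDerivAt (fun v => d - ∑ m, v m * x m) (-weightedSumCLM x) w := by
  simp_rw [← weightedSumCLM_apply]
  simpa using (weightedSumCLM x).hasFDerivAt.const_sub d

theorem fderiv_star_mul_self_sub_weightedSum_single [DecidableEq ι] [StarRing A]
    [StarModule ℝ A] [ContinuousStar A] (x : ι → A) (d : A) (w : ι → A) (n : ι) (u : A) :
    fderiv ℝ (fun v => star (d - ∑ m, v m * x m) * (d - ∑ m, v m * x m)) w (Pi.single n u) =
      -(star (d - ∑ m, w m * x m) * u * x n + star (x n) * star u * (d - ∑ m, w m * x m)) := by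
  rw [(hasFDerivAt_sub_weightedSum x d w).fderiv_star_mul_self_apply]
  simp only [neg_apply, weightedSumCLM_single, star_neg, star_mul]
  noncomm_ring

end WeightedSum

def ghrOfPartials (D : ℍ[ℝ] → ℍ[ℝ]) : ℍ[ℝ] :=
  (1 / 4 : ℝ) • (D 1 - D qI * qI - D qJ * qJ - D qK * qK)

theorem ghrV_eq_ghrOfPartials {N : ℕ} (f : (Fin N → ℍ[ℝ]) → ℍ[ℝ]) (w : Fin N → ℍ[ℝ])
    (n : Fin N) : ghrV f w n = ghrOfPartials fun u => fderiv ℝ f w (Pi.single n u) :=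
  rfl

theorem ghrOfPartials_add (D D' : ℍ[ℝ] → ℍ[ℝ]) :
    ghrOfPartials (fun u => D u + D' u) = ghrOfPartials D + ghrOfPartials D' := by
  simp only [ghrOfPartials, add_mul]
  module

theorem ghrOfPartials_neg (D : ℍ[ℝ] → ℍ[ℝ]) :
    ghrOfPartials (fun u => -D u) = -ghrOfPartials D := by
  simp only [ghrOfPartials, neg_mul]
  module

theorem ghrOfPartials_mul_mul (a b : ℍ[ℝ]) : ghrOfPartials (fun u => a * u * b) = a * b.re := by
  ext <;> simp [ghrOfPartials] <;> simp [qI, qJ, qK] <;> ring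

theorem ghrOfPartials_mul_star_mul (a b : ℍ[ℝ]) :
    ghrOfPartials (fun u => a * star u * b) = -(1 / 2 : ℍ[ℝ]) * (a * star b) := by
  rw [neg_mul, Quaternion.one_half_mul]
  ext <;> simp [ghrOfPartials] <;> simp [qI, qJ, qK] <;> ring

/-- **QLMS gradient**: for the cost `J(w) = e(w)* e(w)` with `e(w) = d − Σ_m w_m x_m`,
the GHR derivative with respect to each component is `∂J/∂w_n = −½ x_n e(w)*`. -/
theorem qlms_gradient {N : ℕ} (x : Fin N → ℍ[ℝ]) (d : ℍ[ℝ]) (w : Fin N → ℍ[ℝ]) :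
    ∀ n : Fin N,
      ghrV (fun v => star (d - ∑ m, v m * x m) * (d - ∑ m, v m * x m)) w n =
        -(1 / 2 : ℍ[ℝ]) * (x n * star (d - ∑ m, w m * x m)) := by
  intro n
  simp_rw [ghrV_eq_ghrOfPartials, fderiv_star_mul_self_sub_weightedSum_single, ghrOfPartials_neg,
    ghrOfPartials_add, ghrOfPartials_mul_mul, ghrOfPartials_mul_star_mul]
  generalize x n = p, d - ∑ m, w m * x m = e
  rw [← Quaternion.coe_commutes, Quaternion.coe_re_eq_half_smul]
  simp only [neg_mul, Quaternion.one_half_mul, smul_mul_assoc, add_mul]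
  module
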